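/- arXiv:1511.03699 — 9 statements merged into one kernel-verified Lean document; each statement's English description precedes it below -/
import Mathlib

section
/- For every deterministic DSIC and IR mechanism in the two-bidder two-item online setting, for every report w of bidder W there exists a threshold π₁(w) ∈ [0,∞] such that for all reports v of bidder V: if v₁ > π₁(w) then bidder V is allocated item 1, and if v₁ < π₁(w) then bidder V is not allocated item 1. In particular the allocation of item 1 to V does not depend on v₂. -/
open scoped ENNReal

noncomputable section

/-- Nonnegative orthant of ℝ² (valid type space of a bidder). -/
def Nn (p : ℝ × ℝ) : Prop := 0 ≤ p.1 ∧ 0 ≤ p.2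

/-- A deterministic mechanism for two unit-demand bidders `V`, `W` and two items.
`xV1 v w` is the (scenario-independent) allocation of item 1 to `V`, `xV2 v w`
the allocation of item 2 to `V` in the scenario where both items arrive;
`pV1` is `V`'s payment in the only-item-1 scenario and `pV2` in the both-items
scenario; similarly for `W`. -/
structure Mechanism where
  xV1 : ℝ × ℝ → ℝ × ℝ → Bool
  xV2 : ℝ × ℝ → ℝ × ℝ → Bool
  xW1 : ℝ × ℝ → ℝ × ℝ → Bool
  xW2 : ℝ × ℝ → ℝ × ℝ → Bool
  pV1 : ℝ × ℝ → ℝ × ℝ → ℝ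
  pV2 : ℝ × ℝ → ℝ × ℝ → ℝ
  pW1 : ℝ × ℝ → ℝ × ℝ → ℝ
  pW2 : ℝ × ℝ → ℝ × ℝ → ℝ
  feas1 : ∀ v w, ¬(xV1 v w = true ∧ xW1 v w = true)
  feas2 : ∀ v w, ¬(xV2 v w = true ∧ xW2 v w = true)

/-- Unit-demand value of a bidder with type `t` for the set of items indicated by `a1, a2`. -/
def setVal (t : ℝ × ℝ) (a1 a2 : Bool) : ℝ :=
  if a1 then (if a2 then max t.1 t.2 else t.1) else (if a2 then t.2 else 0)

/-- Utility of `V` with true type `t`, report `r`, opponent report `w`, when only item 1 arrives. -/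
def uV1 (m : Mechanism) (t r w : ℝ × ℝ) : ℝ := (if m.xV1 r w then t.1 else 0) - m.pV1 r w

/-- Utility of `V` with true type `t`, report `r`, opponent report `w`, when both items arrive. -/
def uV2 (m : Mechanism) (t r w : ℝ × ℝ) : ℝ := setVal t (m.xV1 r w) (m.xV2 r w) - m.pV2 r w

def uW1 (m : Mechanism) (v t r : ℝ × ℝ) : ℝ := (if m.xW1 v r then t.1 else 0) - m.pW1 v r

def uW2 (m : Mechanism) (v t r : ℝ × ℝ) : ℝ := setVal t (m.xW1 v r) (m.xW2 v r) - m.pW2 v r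

/-- Dominant-strategy incentive compatibility in every arrival scenario. -/
def DSIC (m : Mechanism) : Prop :=
  (∀ t r w, Nn t → Nn r → Nn w → uV1 m t r w ≤ uV1 m t t w) ∧
  (∀ t r w, Nn t → Nn r → Nn w → uV2 m t r w ≤ uV2 m t t w) ∧
  (∀ v t r, Nn v → Nn t → Nn r → uW1 m v t r ≤ uW1 m v t t) ∧
  (∀ v t r, Nn v → Nn t → Nn r → uW2 m v t r ≤ uW2 m v t t)

/-- Individual rationality: truthful reporting gives nonnegative utility in every scenario. -/
def IR (m : Mechanism) : Prop :=
  ∀ v w, Nn v → Nn w →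
    0 ≤ uV1 m v v w ∧ 0 ≤ uV2 m v v w ∧ 0 ≤ uW1 m v w w ∧ 0 ≤ uW2 m v w w

/-- Welfare of the mechanism's allocation when only item 1 arrives. -/
def welfare1 (m : Mechanism) (v w : ℝ × ℝ) : ℝ :=
  (if m.xV1 v w then v.1 else 0) + (if m.xW1 v w then w.1 else 0)

/-- Welfare of the mechanism's allocation when both items arrive. -/
def welfare2 (m : Mechanism) (v w : ℝ × ℝ) : ℝ :=
  setVal v (m.xV1 v w) (m.xV2 v w) + setVal w (m.xW1 v w) (m.xW2 v w)

/-- Optimal welfare when only item 1 arrives. -/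
def opt1 (v w : ℝ × ℝ) : ℝ := max v.1 w.1

/-- Optimal (max-weight matching) welfare when both items arrive. -/
def opt2 (v w : ℝ × ℝ) : ℝ := max (v.1 + w.2) (v.2 + w.1)

/-- The mechanism achieves approximation factor `H` to the optimal social welfare,
in every arrival scenario and for all reports. -/
def ApproxH (m : Mechanism) (H : ℝ) : Prop :=
  ∀ v w, Nn v → Nn w → opt1 v w ≤ H * welfare1 m v w ∧ opt2 v w ≤ H * welfare2 m v w

/-- `π ∈ [0,∞]` is a threshold for allocating item 1 to `V` against report `w`. -/
def IsThresh1 (m : Mechanism) (w : ℝ × ℝ) (π : ℝ≥0∞) : Prop :=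
  ∀ v, Nn v →
    (π < ENNReal.ofReal v.1 → m.xV1 v w = true) ∧
    (ENNReal.ofReal v.1 < π → m.xV1 v w = false)

/-- `π₂ ∈ [0,∞]` is a threshold (with threshold payment) for allocating item 2 to `V`
against `w`, conditional on `V` losing item 1 (`v₁ < π₁`). -/
def IsThresh2 (m : Mechanism) (w : ℝ × ℝ) (π₁ π₂ : ℝ≥0∞) : Prop :=
  ∀ v, Nn v → ENNReal.ofReal v.1 < π₁ →
    (π₂ < ENNReal.ofReal v.2 → m.xV2 v w = true ∧ m.pV2 v w = π₂.toReal) ∧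
    (ENNReal.ofReal v.2 < π₂ → m.xV2 v w = false ∧ m.pV2 v w = 0)

/-- Monotonicity of item-1 allocation in `v₁`, from DSIC in the only-item-1 scenario. -/
lemma xV1_mono (m : Mechanism) (hD : DSIC m) (w : ℝ × ℝ) (hw : Nn w)
    (r t : ℝ × ℝ) (hr : Nn r) (ht : Nn t) (hrt : r.1 < t.1)
    (hx : m.xV1 r w = true) : m.xV1 t w = true := by
  by_contra hxt
  have hxt' : m.xV1 t w = false := by
    cases h : m.xV1 t w with
    | false => rfl
    | true => exact absurd h hxt
  have h1 : uV1 m t r w ≤ uV1 m t t w := hD.1 t r w ht hr hw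
  have h2 : uV1 m r t w ≤ uV1 m r r w := hD.1 r t w hr ht hw
  simp [uV1, hx, hxt'] at h1 h2
  linarith

/-- every deterministic DSIC + IR mechanism admits, for each report `w`
of bidder `W`, a threshold `π₁(w) ∈ [0,∞]` such that `V` gets item 1 whenever
`v₁ > π₁(w)` and does not get item 1 whenever `v₁ < π₁(w)` (independently of `v₂`). -/
theorem item1_threshold (m : Mechanism) (hD : DSIC m) (hIR : IR m)
    (w : ℝ × ℝ) (hw : Nn w) :
    ∃ π₁ : ℝ≥0∞, IsThresh1 m w π₁ := by
  classical
  set S : Set ℝ≥0∞ :=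
    {x | ∃ v : ℝ × ℝ, Nn v ∧ m.xV1 v w = true ∧ x = ENNReal.ofReal v.1} with hS
  refine ⟨sInf S, fun v hv => ⟨?_, ?_⟩⟩
  · intro hlt
    obtain ⟨s, hsS, hs⟩ := sInf_lt_iff.mp hlt
    obtain ⟨v', hv', hx', rfl⟩ := hsS
    have hv1pos : 0 < v.1 := by
      by_contra h
      push_neg at h
      simp [ENNReal.ofReal_eq_zero.mpr h] at hs
    have : v'.1 < v.1 := by
      by_contra h
      push_neg at h
      exact absurd (ENNReal.ofReal_le_ofReal h) (not_le.mpr hs)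
    exact xV1_mono m hD w hw v' v hv' hv this hx'
  · intro hlt
    by_contra hx
    have hx' : m.xV1 v w = true := by
      cases h : m.xV1 v w with
      | false => exact absurd h hx
      | true => rfl
    have : ENNReal.ofReal v.1 ∈ S := ⟨v, hv, hx', rfl⟩
    exact absurd (csInf_le (OrderBot.bddBelow S) this) (not_le.mpr hlt)
end
end

section
/- For every deterministic DSIC and IR mechanism in the two-bidder two-item online setting that achieves a finite approximation factor, for every w ∈ ℝ₊² with w₁ > 0, the item-2 threshold satisfies π₂(w) < ∞. -/
open scoped ENNReal

noncomputable section

/-! If `π₂(w) = ∞`, a bidder `V` of type `v = (0, v₂)` loses item 1 (because `π₁(w) > 0`) and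
never wins item 2, so in the both-items scenario the welfare is at most `max w₁ w₂` while the
optimum is at least `v₂`. Letting `v₂` exceed `H · max w₁ w₂` breaks the approximation. -/

theorem setVal_le_max {t : ℝ × ℝ} (ht : Nn t) (a₁ a₂ : Bool) : setVal t a₁ a₂ ≤ max t.1 t.2 := by
  have h₁ : t.1 ≤ max t.1 t.2 := le_max_left _ _
  have h₂ : t.2 ≤ max t.1 t.2 := le_max_right _ _
  cases a₁ <;> cases a₂ <;> simp only [setVal, Bool.false_eq_true, ↓reduceIte] <;> linarith [ht.1]

theorem welfare1_eq_of_xV1 {m : Mechanism} {v w : ℝ × ℝ} (h : m.xV1 v w = true) :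
    welfare1 m v w = v.1 := by
  have hW : m.xW1 v w = false := by
    simpa using fun hW => m.feas1 v w ⟨h, hW⟩
  simp [welfare1, h, hW]

theorem welfare2_le_of_xV_false {m : Mechanism} {v w : ℝ × ℝ} (hw : Nn w)
    (h₁ : m.xV1 v w = false) (h₂ : m.xV2 v w = false) : welfare2 m v w ≤ max w.1 w.2 := by
  simpa [welfare2, setVal, h₁, h₂] using setVal_le_max hw (m.xW1 v w) (m.xW2 v w)

namespace ApproxH

variable {m : Mechanism} {H : ℝ}

theorem le_mul_of_xV1 (hA : ApproxH m H) {v w : ℝ × ℝ} (hv : Nn v) (hw : Nn w)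
    (h : m.xV1 v w = true) : w.1 ≤ H * v.1 :=
  calc w.1 ≤ opt1 v w := le_max_right _ _
    _ ≤ H * welfare1 m v w := (hA v w hv hw).1
    _ = H * v.1 := by rw [welfare1_eq_of_xV1 h]

theorem snd_le_of_xV_false (hA : ApproxH m H) (hH : 0 ≤ H) {v w : ℝ × ℝ} (hv : Nn v) (hw : Nn w)
    (h₁ : m.xV1 v w = false) (h₂ : m.xV2 v w = false) : v.2 ≤ H * max w.1 w.2 :=
  calc v.2 ≤ v.2 + w.1 := le_add_of_nonneg_right hw.1
    _ ≤ opt2 v w := le_max_right _ _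
    _ ≤ H * welfare2 m v w := (hA v w hv hw).2
    _ ≤ H * max w.1 w.2 := mul_le_mul_of_nonneg_left (welfare2_le_of_xV_false hw h₁ h₂) hH

theorem thresh1_pos (hA : ApproxH m H) (hH : 0 < H) {w : ℝ × ℝ} {π : ℝ≥0∞}
    (hπ : IsThresh1 m w π) (hw : Nn w) (hw₁ : 0 < w.1) : 0 < π := by
  rw [pos_iff_ne_zero]
  rintro rfl
  set v : ℝ × ℝ := (w.1 / (2 * H), 0)
  have hv₁ : 0 < v.1 := by positivity
  have hv : Nn v := ⟨hv₁.le, le_rfl⟩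
  have hwin : m.xV1 v w = true := (hπ v hv).1 (by simpa using hv₁)
  have : w.1 ≤ w.1 / 2 :=
    calc w.1 ≤ H * v.1 := hA.le_mul_of_xV1 hv hw hwin
      _ = w.1 / 2 := by simp only [v]; field_simp
  linarith

end ApproxH

theorem pi2_finite_general (m : Mechanism)
    (H : ℝ) (hH : 1 ≤ H) (hA : ApproxH m H)
    (π₁ π₂ : ℝ × ℝ → ℝ≥0∞)
    (hπ₁ : ∀ w, Nn w → IsThresh1 m w (π₁ w))
    (hπ₂ : ∀ w, Nn w → 0 < w.1 → IsThresh2 m w (π₁ w) (π₂ w)) :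
    ∀ w, Nn w → 0 < w.1 → π₂ w < ⊤ := by
  intro w hw hw₁
  rw [lt_top_iff_ne_top]
  intro htop
  have hH₀ : 0 < H := one_pos.trans_le hH
  set v : ℝ × ℝ := (0, H * max w.1 w.2 + 1)
  have hv : Nn v := ⟨le_rfl, by positivity⟩
  have hv₁ : ENNReal.ofReal v.1 < π₁ w := by
    simpa [v] using hA.thresh1_pos hH₀ (hπ₁ w hw) hw hw₁
  have hlose₁ : m.xV1 v w = false := (hπ₁ w hw v hv).2 hv₁
  have hlose₂ : m.xV2 v w = false :=
    ((hπ₂ w hw hw₁ v hv hv₁).2 (htop ▸ ENNReal.ofReal_lt_top)).1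
  have hv₂ := hA.snd_le_of_xV_false hH₀.le hv hw hlose₁ hlose₂
  simp only [v] at hv₂
  linarith

/-- a DSIC + IR mechanism with a finite approximation factor has
`π₂(w) < ∞` for every `w` with `w₁ > 0`. -/
theorem pi2_finite (m : Mechanism) (hD : DSIC m) (hIR : IR m)
    (H : ℝ) (hH : 1 ≤ H) (hA : ApproxH m H)
    (π₁ π₂ : ℝ × ℝ → ℝ≥0∞)
    (hπ₁ : ∀ w, Nn w → IsThresh1 m w (π₁ w))
    (hπ₂ : ∀ w, Nn w → 0 < w.1 → IsThresh2 m w (π₁ w) (π₂ w)) :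
    ∀ w, Nn w → 0 < w.1 → π₂ w < ⊤ :=
  pi2_finite_general m H hH hA π₁ π₂ hπ₁ hπ₂
end
end

section
/- For every deterministic DSIC and IR mechanism in the two-bidder two-item online setting achieving a finite approximation factor, fix w ∈ ℝ₊² with w₁ > 0 and let T_R^V(w) = {v ∈ ℝ₊² : v₁ > π₁(w) and v₂ − π₂(w) > v₁ − π₁(w)}. Then for every v ∈ T_R^V(w), in the scenario where both items arrive, bidder V is allocated both items and pays π₂(w). -/
open scoped ENNReal

noncomputable section

/-- Real-valued item-1 threshold function for bidder `V`. -/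
def Thresh1 (m : Mechanism) (π₁ : ℝ × ℝ → ℝ) : Prop :=
  ∀ w v, Nn w → Nn v →
    (π₁ w < v.1 → m.xV1 v w = true) ∧ (v.1 < π₁ w → m.xV1 v w = false)

/-- Real-valued item-2 threshold function (with threshold payment) for bidder `V`,
conditional on losing item 1. -/
def Thresh2 (m : Mechanism) (π₁ π₂ : ℝ × ℝ → ℝ) : Prop :=
  ∀ w v, Nn w → 0 < w.1 → Nn v → v.1 < π₁ w →
    (π₂ w < v.2 → m.xV2 v w = true ∧ m.pV2 v w = π₂ w) ∧
    (v.2 < π₂ w → m.xV2 v w = false ∧ m.pV2 v w = 0)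

/-- When `V` wins only item 1 (in the both-items scenario) he pays `π₁ w`. -/
def PayOne (m : Mechanism) (π₁ : ℝ × ℝ → ℝ) : Prop :=
  ∀ w v, Nn w → Nn v → m.xV1 v w = true → m.xV2 v w = false → m.pV2 v w = π₁ w

/-- Every `v` in the region `T_R^V(w)` wins both items and pays `π₂ w`. -/
def TRBoth (m : Mechanism) (π₁ π₂ : ℝ × ℝ → ℝ) : Prop :=
  ∀ w v, Nn w → 0 < w.1 → Nn v → π₁ w < v.1 → v.1 - π₁ w < v.2 - π₂ w →
    m.xV1 v w = true ∧ m.xV2 v w = true ∧ m.pV2 v w = π₂ w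

/-- for a DSIC + IR mechanism with finite approximation factor and
`w₁ > 0`, every `v ∈ T_R^V(w) = {v : v₁ > π₁(w), v₂ − π₂(w) > v₁ − π₁(w)}`
is allocated both items in the both-items scenario and pays `π₂(w)`. -/
theorem TR_gets_both (m : Mechanism) (hD : DSIC m) (hIR : IR m)
    (H : ℝ) (hH : 1 ≤ H) (hA : ApproxH m H)
    (π₁ π₂ : ℝ × ℝ → ℝ)
    (h1 : Thresh1 m π₁) (h2 : Thresh2 m π₁ π₂) (hpay : PayOne m π₁)
    (w : ℝ × ℝ) (hw : Nn w) (hw1 : 0 < w.1) :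
    ∀ v, Nn v → π₁ w < v.1 → v.1 - π₁ w < v.2 - π₂ w →
      m.xV1 v w = true ∧ m.xV2 v w = true ∧ m.pV2 v w = π₂ w := by
  have hHpos : (0:ℝ) < H := lt_of_lt_of_le one_pos hH
  -- Step 0 : the item-1 threshold is strictly positive
  have hp1pos : 0 < π₁ w := by
    by_contra h
    push_neg at h
    set ε := w.1 / (2*H) with hε
    have hεpos : 0 < ε := div_pos hw1 (by linarith)
    have hNv : Nn (ε, 0) := ⟨le_of_lt hεpos, le_refl 0⟩
    have hx : m.xV1 (ε,0) w = true :=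
      (h1 w (ε,0) hw hNv).1 (by simpa using lt_of_le_of_lt h hεpos)
    have hxw : m.xW1 (ε,0) w = false := by
      by_contra hf
      exact m.feas1 (ε,0) w ⟨hx, by simpa using hf⟩
    have happ := (hA (ε,0) w hNv hw).1
    rw [welfare1, opt1, hx, hxw] at happ
    simp only [if_true, if_false] at happ
    have h1' : w.1 ≤ H * (ε + 0) := le_trans (le_max_right _ _) happ
    have hEq : H * (ε + 0) = w.1/2 := by
      rw [hε]; field_simp; ring
    linarith
  -- Step 1 : every point of T_R wins both items, and pays at least π₂ w
  have aux : ∀ u : ℝ × ℝ, Nn u → π₁ w < u.1 → u.1 - π₁ w < u.2 - π₂ w →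
      m.xV1 u w = true ∧ m.xV2 u w = true ∧ π₂ w ≤ m.pV2 u w := by
    intro u hu hu1 huT
    have hupos : 0 < u.1 - π₁ w := sub_pos.mpr hu1
    have hu2 : π₂ w < u.2 := by linarith
    have hx1 : m.xV1 u w = true := (h1 w u hw hu).1 hu1
    have hNr : Nn ((0:ℝ), u.2) := ⟨le_refl _, hu.2⟩
    have hr0 : ((0:ℝ), u.2).1 < π₁ w := by simpa using hp1pos
    have hrx1 : m.xV1 (0, u.2) w = false := (h1 w (0,u.2) hw hNr).2 hr0
    have hr2 := (h2 w (0,u.2) hw hw1 hNr hr0).1 (by simpa using hu2)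
    have hx2 : m.xV2 u w = true := by
      by_contra hf
      have hx2f : m.xV2 u w = false := by simpa using hf
      have hpv : m.pV2 u w = π₁ w := hpay w u hw hu hx1 hx2f
      have hdsic := hD.2.1 u (0,u.2) w hu hNr hw
      rw [uV2, uV2, hx1, hx2f, hrx1, hr2.1, hr2.2, hpv] at hdsic
      simp only [setVal, Bool.false_eq_true, if_true, if_false] at hdsic
      linarith
    refine ⟨hx1, hx2, ?_⟩
    have hdsic := hD.2.1 (0,u.2) u w hNr hu hw
    rw [uV2, uV2, hx1, hx2, hrx1, hr2.1, hr2.2] at hdsic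
    simp only [setVal, Bool.false_eq_true, if_true, if_false] at hdsic
    rw [max_eq_right hu.2] at hdsic
    linarith
  intro v hv hv1 hvT
  obtain ⟨hx1, hx2, hlb⟩ := aux v hv hv1 hvT
  refine ⟨hx1, hx2, le_antisymm ?_ hlb⟩
  -- the tall witness r* = (v.1, T)
  set T := max v.1 (v.1 - π₁ w + π₂ w) + 1 with hT
  have hT1 : v.1 ≤ T := by
    have := le_max_left v.1 (v.1 - π₁ w + π₂ w); linarith
  have hT2 : v.1 - π₁ w < T - π₂ w := by
    have := le_max_right v.1 (v.1 - π₁ w + π₂ w); linarith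
  have hTpos : 0 ≤ T := le_trans hv.1 hT1
  have hNs : Nn (v.1, T) := ⟨hv.1, hTpos⟩
  obtain ⟨hsx1, hsx2, hslb⟩ := aux (v.1, T) hNs (by simpa using hv1) (by simpa using hT2)
  -- pV2 (v.1,T) w = π₂ w : deviate (v.1,T) → (0,T)
  have hTp2 : π₂ w < T := by
    have : 0 < v.1 - π₁ w := sub_pos.mpr hv1
    linarith
  have hNr : Nn ((0:ℝ), T) := ⟨le_refl _, hTpos⟩
  have hr0 : ((0:ℝ), T).1 < π₁ w := by simpa using hp1pos
  have hrx1 : m.xV1 (0, T) w = false := (h1 w (0,T) hw hNr).2 hr0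
  have hr2 := (h2 w (0,T) hw hw1 hNr hr0).1 (by simpa using hTp2)
  have hsp : m.pV2 (v.1, T) w = π₂ w := by
    refine le_antisymm ?_ hslb
    have hdsic := hD.2.1 (v.1,T) (0,T) w hNs hNr hw
    rw [uV2, uV2, hsx1, hsx2, hrx1, hr2.1, hr2.2] at hdsic
    simp only [setVal, Bool.false_eq_true, if_true, if_false] at hdsic
    rw [max_eq_right hT1] at hdsic
    linarith
  -- deviate v → (v.1, T)
  have hdsic := hD.2.1 v (v.1,T) w hv hNs hw
  rw [uV2, uV2, hx1, hx2, hsx1, hsx2, hsp] at hdsic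
  simp only [setVal, Bool.false_eq_true, if_true, if_false] at hdsic
  linarith
end
end

section
/- For every deterministic DSIC and IR mechanism in the two-bidder two-item online setting achieving a finite approximation factor, for every w ∈ ℝ₊² with w₁ > 0 we have π₂(w) ≥ π₁(w). -/
open scoped ENNReal

noncomputable section

/-! If `π₂ w < π₁ w`, two cases arise. When `π₁ w ≤ 0`, every diagonal type `(x, x)` with `x > 0`
wins both items, so `W` gets nothing and the welfare `x` cannot approximate `x + w.1` once
`H * x ≤ w.1`. When `π₁ w > 0`, a type `t` with `π₂ w < t.2 < t.1 < π₁ w` wins only item 2 at price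
`π₂ w`, but by overbidding on item 1 it would win both items at the same price and gain
`t.1 - t.2 > 0`. -/

namespace Mechanism

variable (m : Mechanism) {v w : ℝ × ℝ}

theorem xW1_eq_false (h : m.xV1 v w = true) : m.xW1 v w = false := by
  simpa [h] using m.feas1 v w

theorem xW2_eq_false (h : m.xV2 v w = true) : m.xW2 v w = false := by
  simpa [h] using m.feas2 v w

theorem welfare2_eq_of_wins_both (h1 : m.xV1 v w = true) (h2 : m.xV2 v w = true) :
    welfare2 m v w = max v.1 v.2 := by
  simp [welfare2, setVal, h1, h2, m.xW1_eq_false h1, m.xW2_eq_false h2]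

theorem uV2_eq_of_wins_both {t r : ℝ × ℝ} (h1 : m.xV1 r w = true) (h2 : m.xV2 r w = true) :
    uV2 m t r w = max t.1 t.2 - m.pV2 r w := by
  simp [uV2, setVal, h1, h2]

theorem uV2_eq_of_wins_only_item2 {t r : ℝ × ℝ} (h1 : m.xV1 r w = false)
    (h2 : m.xV2 r w = true) : uV2 m t r w = t.2 - m.pV2 r w := by
  simp [uV2, setVal, h1, h2]

end Mechanism

theorem ApproxH.snd_add_le_of_wins_both {m : Mechanism} {H : ℝ} (hA : ApproxH m H)
    {v w : ℝ × ℝ} (hv : Nn v) (hw : Nn w) (h1 : m.xV1 v w = true) (h2 : m.xV2 v w = true) :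
    v.2 + w.1 ≤ H * max v.1 v.2 := by
  calc v.2 + w.1 ≤ opt2 v w := le_max_right _ _
    _ ≤ H * welfare2 m v w := (hA v w hv hw).2
    _ = H * max v.1 v.2 := by rw [m.welfare2_eq_of_wins_both h1 h2]

theorem pi1_pos_of_pi2_lt_pi1 {m : Mechanism} {H : ℝ} (hH : 0 < H) (hA : ApproxH m H)
    {π₁ π₂ : ℝ × ℝ → ℝ} (hTR : TRBoth m π₁ π₂) {w : ℝ × ℝ} (hw : Nn w) (hw1 : 0 < w.1)
    (hlt : π₂ w < π₁ w) : 0 < π₁ w := by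
  by_contra! hπ₁
  set x := w.1 / H
  have hx : 0 < x := div_pos hw1 hH
  have hv : Nn (x, x) := ⟨hx.le, hx.le⟩
  obtain ⟨hwin1, hwin2, -⟩ :=
    hTR w (x, x) hw hw1 hv (by dsimp only; linarith) (by dsimp only; linarith)
  have hbound := hA.snd_add_le_of_wins_both hv hw hwin1 hwin2
  have hHx : H * x = w.1 := mul_div_cancel₀ _ hH.ne'
  simp only [max_self] at hbound
  linarith

theorem DSIC.pi1_le_fst_of_pi2_lt_snd_lt_fst {m : Mechanism} (hD : DSIC m)
    {π₁ π₂ : ℝ × ℝ → ℝ} (h1 : Thresh1 m π₁) (h2 : Thresh2 m π₁ π₂) (hTR : TRBoth m π₁ π₂)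
    {w t : ℝ × ℝ} (hw : Nn w) (hw1 : 0 < w.1) (ht : Nn t)
    (hπ₂ : π₂ w < t.2) (ht21 : t.2 < t.1) : π₁ w ≤ t.1 := by
  by_contra! hπ₁
  have hlose1 : m.xV1 t w = false := (h1 w t hw ht).2 hπ₁
  obtain ⟨hwin2, hpay⟩ := (h2 w t hw hw1 ht hπ₁).1 hπ₂
  set r : ℝ × ℝ := (π₁ w + 1, π₁ w + 1)
  have hr : Nn r := ⟨by dsimp only [r]; linarith [ht.1], by dsimp only [r]; linarith [ht.1]⟩
  obtain ⟨hr1, hr2, hrpay⟩ :=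
    hTR w r hw hw1 hr (by dsimp only [r]; linarith) (by dsimp only [r]; linarith)
  have hdev := hD.2.1 t r w ht hr hw
  rw [m.uV2_eq_of_wins_both hr1 hr2, m.uV2_eq_of_wins_only_item2 hlose1 hwin2, hrpay, hpay,
    max_eq_left ht21.le] at hdev
  linarith

theorem pi2_ge_pi1_general (m : Mechanism) (hD : DSIC m)
    (H : ℝ) (hH : 1 ≤ H) (hA : ApproxH m H)
    (π₁ π₂ : ℝ × ℝ → ℝ)
    (h1 : Thresh1 m π₁) (h2 : Thresh2 m π₁ π₂)
    (hTR : TRBoth m π₁ π₂) :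
    ∀ w, Nn w → 0 < w.1 → π₁ w ≤ π₂ w := by
  intro w hw hw1
  by_contra! hlt
  have hπ₁ := pi1_pos_of_pi2_lt_pi1 (zero_lt_one.trans_le hH) hA hTR hw hw1 hlt
  set a := max (π₂ w) 0
  have ha : a < π₁ w := max_lt hlt hπ₁
  have ha₀ : 0 ≤ a := le_max_right _ _
  have hπ₂ : π₂ w ≤ a := le_max_left _ _
  set t : ℝ × ℝ := ((a + 2 * π₁ w) / 3, (2 * a + π₁ w) / 3)
  have ht : Nn t := ⟨by dsimp only [t]; linarith, by dsimp only [t]; linarith⟩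
  have hπ₁t : π₁ w ≤ t.1 := hD.pi1_le_fst_of_pi2_lt_snd_lt_fst h1 h2 hTR hw hw1 ht
    (by dsimp only [t]; linarith) (by dsimp only [t]; linarith)
  dsimp only [t] at hπ₁t
  linarith

/-- for a DSIC + IR mechanism with finite approximation factor,
`π₂(w) ≥ π₁(w)` for every `w` with `w₁ > 0`. -/
theorem pi2_ge_pi1 (m : Mechanism) (hD : DSIC m) (hIR : IR m)
    (H : ℝ) (hH : 1 ≤ H) (hA : ApproxH m H)
    (π₁ π₂ : ℝ × ℝ → ℝ)
    (h1 : Thresh1 m π₁) (h2 : Thresh2 m π₁ π₂)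
    (hpay : PayOne m π₁) (hTR : TRBoth m π₁ π₂) :
    ∀ w, Nn w → 0 < w.1 → π₁ w ≤ π₂ w :=
  pi2_ge_pi1_general m hD H hH hA π₁ π₂ h1 h2 hTR
end
end

section
/- In the two-bidder two-item online setting, for every deterministic DSIC+IR mechanism achieving approximation factor H, for all N ≥ H, all ε < 1/H, and all w with 0 < w₁ < ε and w₂ = N: (1) π₁(w) < H·ε, and (2) if additionally v₁ < H·ε, then item 2 (when it arrives) is allocated to some bidder. -/
open scoped ENNReal

noncomputable section

/-- for a DSIC + IR mechanism with approximation factor `H`,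
for all `N ≥ H`, `ε < 1/H` and `w ∈ S_{N,ε}` (i.e. `0 < w₁ < ε`, `w₂ = N`):
(1) `π₁(w) < H·ε`, and (2) if moreover `v₁ < H·ε` then item 2 is allocated
to some bidder in the both-items scenario. -/
theorem pi1_small_and_item2_allocated (m : Mechanism) (hD : DSIC m) (hIR : IR m)
    (H : ℝ) (hH : 1 ≤ H) (hA : ApproxH m H)
    (π₁ π₂ : ℝ × ℝ → ℝ)
    (h1 : Thresh1 m π₁) (h2 : Thresh2 m π₁ π₂) :
    ∀ N ε : ℝ, H ≤ N → ε < 1 / H →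
      ∀ w : ℝ × ℝ, 0 < w.1 → w.1 < ε → w.2 = N →
        π₁ w < H * ε ∧
        (∀ v, Nn v → v.1 < H * ε → m.xV2 v w = true ∨ m.xW2 v w = true) := by
  intro N ε hN hε w hw1 hwε hw2
  have hH0 : (0:ℝ) < H := lt_of_lt_of_le one_pos hH
  have hε0 : (0:ℝ) < ε := lt_trans hw1 hwε
  have hHε : H * ε < 1 := by
    have := (lt_div_iff₀ hH0).mp hε
    linarith [this, mul_comm ε H]
  have hNnw : Nn w := ⟨le_of_lt hw1, by rw [hw2]; linarith⟩
  constructor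
  · by_contra hc
    push_neg at hc
    set v : ℝ × ℝ := ((H * w.1 + H * ε) / 2, 0) with hv
    have hv1gt : H * w.1 < v.1 := by
      simp only [hv]
      nlinarith
    have hv1lt : v.1 < H * ε := by
      simp only [hv]
      nlinarith
    have hNnv : Nn v := ⟨by nlinarith [mul_pos hH0 hw1], le_refl 0⟩
    have hfalse : m.xV1 v w = false :=
      (h1 w v hNnw hNnv).2 (lt_of_lt_of_le hv1lt hc)
    have hA1 := (hA v w hNnv hNnw).1
    have hwel : welfare1 m v w ≤ w.1 := by
      unfold welfare1
      rw [hfalse]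
      simp only [if_neg Bool.false_ne_true, Bool.false_eq_true, if_false]
      split_ifs <;> linarith
    have hopt : v.1 ≤ opt1 v w := le_max_left _ _
    nlinarith
  · intro v hNv hv1
    by_contra hc
    push_neg at hc
    obtain ⟨hV2, hW2⟩ := hc
    simp only [ne_eq, Bool.not_eq_true] at hV2 hW2
    have hfeas := m.feas1 v w
    have hwel : welfare2 m v w ≤ max v.1 w.1 := by
      have hb : welfare2 m v w =
          (if m.xV1 v w then v.1 else 0) + (if m.xW1 v w then w.1 else 0) := by
        unfold welfare2 setVal
        rw [hV2, hW2]
        simp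
      rw [hb]
      by_cases h1c : m.xV1 v w = true
      · have h2c : m.xW1 v w = false := by
          cases hx : m.xW1 v w
          · rfl
          · exact absurd ⟨h1c, hx⟩ hfeas
        simp [h1c, h2c]
      · simp only [Bool.not_eq_true] at h1c
        simp [h1c]
        split_ifs with h
        · exact Or.inr le_rfl
        · exact Or.inl hNv.1
    have hmax : max v.1 w.1 < H * ε := by
      apply max_lt hv1
      nlinarith
    have hA2 := (hA v w hNv hNnw).2
    have hoptN : N ≤ opt2 v w := by
      have h := le_max_left (v.1 + w.2) (v.2 + w.1)
      unfold opt2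
      rw [hw2] at h ⊢
      linarith [hNv.1]
    have hwel2 : welfare2 m v w < H * ε := lt_of_le_of_lt hwel hmax
    nlinarith
end
end

section
/- In the two-bidder two-item online setting, for every deterministic DSIC+IR mechanism achieving approximation factor H, for each N ≥ H and ε < 1/H, the difference π₂(w) − π₁(w) is constant as w ranges over S_{N,ε} = {w : 0 < w₁ < ε, w₂ = N}; i.e., for any w, w' ∈ S_{N,ε}, π₂(w) − π₁(w) = π₂(w') − π₁(w'). -/
open scoped ENNReal

noncomputable section

/-- The four-region characterization of `V`'s allocation via the thresholds `π₁, π₂`. -/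
def Char4V (m : Mechanism) (π₁ π₂ : ℝ × ℝ → ℝ) : Prop :=
  ∀ w v, Nn w → 0 < w.1 → Nn v →
    (v.1 < π₁ w → v.2 < π₂ w → m.xV1 v w = false ∧ m.xV2 v w = false) ∧
    (v.1 < π₁ w → π₂ w < v.2 → m.xV1 v w = false ∧ m.xV2 v w = true) ∧
    (π₁ w < v.1 → v.1 - π₁ w < v.2 - π₂ w → m.xV1 v w = true ∧ m.xV2 v w = true) ∧
    (π₁ w < v.1 → v.2 - π₂ w < v.1 - π₁ w →
      m.xV1 v w = true ∧ (π₁ w < π₂ w → m.xV2 v w = false))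

/-- The symmetric four-region characterization of `W`'s allocation via thresholds `φ₁, φ₂`. -/
def Char4W (m : Mechanism) (φ₁ φ₂ : ℝ × ℝ → ℝ) : Prop :=
  ∀ v w, Nn v → 0 < v.1 → Nn w →
    (w.1 < φ₁ v → w.2 < φ₂ v → m.xW1 v w = false ∧ m.xW2 v w = false) ∧
    (w.1 < φ₁ v → φ₂ v < w.2 → m.xW1 v w = false ∧ m.xW2 v w = true) ∧
    (φ₁ v < w.1 → w.1 - φ₁ v < w.2 - φ₂ v → m.xW1 v w = true ∧ m.xW2 v w = true) ∧
    (φ₁ v < w.1 → w.2 - φ₂ v < w.1 - φ₁ v →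
      m.xW1 v w = true ∧ (φ₁ v < φ₂ v → m.xW2 v w = false))


private lemma aux_pi1_le (m : Mechanism) (H : ℝ) (hH : 1 ≤ H) (hA : ApproxH m H)
    (π₁ : ℝ × ℝ → ℝ) (h1 : Thresh1 m π₁) (u : ℝ × ℝ) (hu : Nn u) :
    π₁ u ≤ H * u.1 := by
  by_contra hcon
  push_neg at hcon
  have hH0 : (0:ℝ) < H := by linarith
  have hu1 : 0 ≤ u.1 := hu.1
  have hr0 : 0 ≤ (H * u.1 + π₁ u) / 2 := by nlinarith
  have hNnr : Nn ((H * u.1 + π₁ u) / 2, (0:ℝ)) := ⟨hr0, le_refl 0⟩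
  have hx : m.xV1 ((H * u.1 + π₁ u) / 2, (0:ℝ)) u = false := by
    apply (h1 u _ hu hNnr).2
    show (H * u.1 + π₁ u) / 2 < π₁ u
    nlinarith
  have happ := (hA _ u hNnr hu).1
  have hop : (H * u.1 + π₁ u) / 2 ≤ opt1 ((H * u.1 + π₁ u) / 2, (0:ℝ)) u := le_max_left _ _
  have hwle : welfare1 m ((H * u.1 + π₁ u) / 2, (0:ℝ)) u ≤ u.1 := by
    simp only [welfare1, hx, Bool.false_eq_true, if_false, zero_add]
    split_ifs <;> linarith
  have hmul : H * welfare1 m ((H * u.1 + π₁ u) / 2, (0:ℝ)) u ≤ H * u.1 :=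
    mul_le_mul_of_nonneg_left hwle (le_of_lt hH0)
  linarith

private lemma aux_pi1_ge (m : Mechanism) (H : ℝ) (hH : 1 ≤ H) (hA : ApproxH m H)
    (π₁ : ℝ × ℝ → ℝ) (h1 : Thresh1 m π₁) (u : ℝ × ℝ) (hu : Nn u) (hu1 : 0 < u.1) :
    u.1 ≤ H * π₁ u := by
  by_contra hcon
  push_neg at hcon
  have hH0 : (0:ℝ) < H := by linarith
  have hπlt : π₁ u < u.1 / H := by
    rw [lt_div_iff₀ hH0]; nlinarith
  have hdiv0 : (0:ℝ) < u.1 / H := by positivity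
  have hmaxlt : max (π₁ u) 0 < u.1 / H := max_lt hπlt hdiv0
  set r₁ : ℝ := (max (π₁ u) 0 + u.1 / H) / 2 with hr₁def
  have hmax0 : (0:ℝ) ≤ max (π₁ u) 0 := le_max_right _ _
  have hr₁pos : 0 < r₁ := by rw [hr₁def]; linarith
  have hr₁gt : π₁ u < r₁ := by
    have := le_max_left (π₁ u) 0
    rw [hr₁def]; linarith
  have hr₁lt : r₁ < u.1 / H := by rw [hr₁def]; linarith
  have hNnr : Nn (r₁, (0:ℝ)) := ⟨le_of_lt hr₁pos, le_refl 0⟩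
  have hx : m.xV1 (r₁, (0:ℝ)) u = true := (h1 u _ hu hNnr).1 hr₁gt
  have hxw : m.xW1 (r₁, (0:ℝ)) u = false := by
    cases h : m.xW1 (r₁, (0:ℝ)) u
    · rfl
    · exact absurd ⟨hx, h⟩ (m.feas1 _ u)
  have happ := (hA _ u hNnr hu).1
  have hop : u.1 ≤ opt1 (r₁, (0:ℝ)) u := le_max_right _ _
  have hwle : welfare1 m (r₁, (0:ℝ)) u = r₁ := by
    simp only [welfare1, hx, hxw]
    simp
  rw [hwle] at happ
  have hfin : H * r₁ < u.1 := by
    have h2 : H * r₁ < H * (u.1 / H) := mul_lt_mul_of_pos_left hr₁lt hH0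
    have h3 : H * (u.1 / H) = u.1 := by field_simp
    linarith
  linarith

private lemma aux_phi1_le (m : Mechanism) (H : ℝ) (hH : 1 ≤ H) (hA : ApproxH m H)
    (φ₁ φ₂ : ℝ × ℝ → ℝ) (hW : Char4W m φ₁ φ₂) (v : ℝ × ℝ) (hv : Nn v) (hv1 : 0 < v.1) :
    φ₁ v ≤ H * v.1 := by
  by_contra hcon
  push_neg at hcon
  have hH0 : (0:ℝ) < H := by linarith
  set u₁ : ℝ := (H * v.1 + φ₁ v) / 2 with hu₁def
  set u₂ : ℝ := max (φ₂ v) 0 + 1 with hu₂def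
  have hu₁gt : H * v.1 < u₁ := by rw [hu₁def]; linarith
  have hu₁lt : u₁ < φ₁ v := by rw [hu₁def]; linarith
  have hu₁pos : 0 < u₁ := by nlinarith [hv.1]
  have hu₂pos : 0 < u₂ := by
    have := le_max_right (φ₂ v) 0
    rw [hu₂def]; linarith
  have hNnu : Nn (u₁, u₂) := ⟨le_of_lt hu₁pos, le_of_lt hu₂pos⟩
  have hxw : m.xW1 v (u₁, u₂) = false := by
    refine ((hW v (u₁, u₂) hv hv1 hNnu).2.1 hu₁lt ?_).1
    show φ₂ v < u₂
    have := le_max_left (φ₂ v) 0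
    rw [hu₂def]; linarith
  have happ := (hA v (u₁, u₂) hv hNnu).1
  have hop : u₁ ≤ opt1 v (u₁, u₂) := le_max_right _ _
  have hwle : welfare1 m v (u₁, u₂) ≤ v.1 := by
    simp only [welfare1, hxw, Bool.false_eq_true, if_false, add_zero]
    split_ifs <;> linarith [hv.1]
  have hmul : H * welfare1 m v (u₁, u₂) ≤ H * v.1 :=
    mul_le_mul_of_nonneg_left hwle (le_of_lt hH0)
  linarith

private lemma aux_phi1_ge (m : Mechanism) (H : ℝ) (hH : 1 ≤ H) (hA : ApproxH m H)
    (φ₁ φ₂ : ℝ × ℝ → ℝ) (hW : Char4W m φ₁ φ₂) (v : ℝ × ℝ) (hv : Nn v) (hv1 : 0 < v.1) :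
    v.1 ≤ H * φ₁ v := by
  by_contra hcon
  push_neg at hcon
  have hH0 : (0:ℝ) < H := by linarith
  have hφlt : φ₁ v < v.1 / H := by
    rw [lt_div_iff₀ hH0]; nlinarith
  have hdiv0 : (0:ℝ) < v.1 / H := by positivity
  have hmaxlt : max (φ₁ v) 0 < v.1 / H := max_lt hφlt hdiv0
  set u₁ : ℝ := (max (φ₁ v) 0 + v.1 / H) / 2 with hu₁def
  have hmax0 : (0:ℝ) ≤ max (φ₁ v) 0 := le_max_right _ _
  have hu₁pos : 0 < u₁ := by rw [hu₁def]; linarith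
  have hu₁gt : φ₁ v < u₁ := by
    have := le_max_left (φ₁ v) 0
    rw [hu₁def]; linarith
  have hu₁lt : u₁ < v.1 / H := by rw [hu₁def]; linarith
  set u₂ : ℝ := max (φ₂ v) 0 + (u₁ - φ₁ v) + 1 with hu₂def
  have hu₂pos : 0 < u₂ := by
    have := le_max_right (φ₂ v) 0
    rw [hu₂def]; linarith
  have hu₂gt : u₁ - φ₁ v < u₂ - φ₂ v := by
    have := le_max_left (φ₂ v) 0
    rw [hu₂def]; linarith
  have hNnu : Nn (u₁, u₂) := ⟨le_of_lt hu₁pos, le_of_lt hu₂pos⟩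
  have hxw : m.xW1 v (u₁, u₂) = true :=
    ((hW v (u₁, u₂) hv hv1 hNnu).2.2.1 hu₁gt hu₂gt).1
  have hxv : m.xV1 v (u₁, u₂) = false := by
    cases h : m.xV1 v (u₁, u₂)
    · rfl
    · exact absurd ⟨h, hxw⟩ (m.feas1 v _)
  have happ := (hA v (u₁, u₂) hv hNnu).1
  have hop : v.1 ≤ opt1 v (u₁, u₂) := le_max_left _ _
  have hwle : welfare1 m v (u₁, u₂) = u₁ := by
    simp only [welfare1, hxv, hxw]
    simp
  rw [hwle] at happ
  have hfin : H * u₁ < v.1 := by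
    have h2 : H * u₁ < H * (v.1 / H) := mul_lt_mul_of_pos_left hu₁lt hH0
    have h3 : H * (v.1 / H) = v.1 := by field_simp
    linarith
  linarith

set_option maxHeartbeats 1600000 in
private lemma aux_key (m : Mechanism)
    (H : ℝ) (hH : 1 ≤ H) (hA : ApproxH m H)
    (π₁ π₂ φ₁ φ₂ : ℝ × ℝ → ℝ)
    (h1 : Thresh1 m π₁)
    (hV : Char4V m π₁ π₂) (hW : Char4W m φ₁ φ₂)
    (N ε : ℝ) (hN : H ≤ N) (hε : ε < 1 / H)
    (hge : ∀ w : ℝ × ℝ, 0 < w.1 → w.1 < ε → w.2 = N → π₁ w ≤ π₂ w)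
    (hAlloc2 : ∀ (v w : ℝ × ℝ), Nn v → 0 < w.1 → w.1 < ε → w.2 = N →
      v.1 < H * ε → m.xV2 v w = true ∨ m.xW2 v w = true)
    (w w' : ℝ × ℝ) (hwa : 0 < w.1) (hwb : w.1 < ε) (hwc : w.2 = N)
    (hw'a : 0 < w'.1) (hw'b : w'.1 < ε) (hw'c : w'.2 = N)
    (hlt : π₂ w - π₁ w < π₂ w' - π₁ w') : False := by
  have hH0 : (0:ℝ) < H := by linarith only [hH]
  have hε0 : (0:ℝ) < ε := lt_trans hwa hwb
  have hεH : ε * H < 1 := by rwa [lt_div_iff₀ hH0] at hε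
  have hεlt1 : ε < 1 := by
    have h' : ε ≤ ε * H := le_mul_of_one_le_right (le_of_lt hε0) hH
    linarith only [h', hεH]
  have hN1 : (1:ℝ) ≤ N := le_trans hH hN
  have hNnw : Nn w := ⟨le_of_lt hwa, by rw [hwc]; linarith only [hN1]⟩
  have hNnw' : Nn w' := ⟨le_of_lt hw'a, by rw [hw'c]; linarith only [hN1]⟩
  have hd0 : 0 ≤ π₂ w - π₁ w := by
    have h' := hge w hwa hwb hwc
    linarith only [h']
  obtain ⟨d, hd_def⟩ : ∃ x : ℝ, x = π₂ w - π₁ w := ⟨_, rfl⟩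
  obtain ⟨d', hd'_def⟩ : ∃ x : ℝ, x = π₂ w' - π₁ w' := ⟨_, rfl⟩
  have hlt' : d < d' := by rw [hd_def, hd'_def]; exact hlt
  have hd0' : 0 ≤ d := by rw [hd_def]; exact hd0
  obtain ⟨ts, hts_def⟩ : ∃ x : ℝ, x = (d + d') / 2 := ⟨_, rfl⟩
  obtain ⟨tb, htb_def⟩ : ∃ x : ℝ, x = (d + ts) / 2 := ⟨_, rfl⟩
  have htb1 : d < tb := by rw [htb_def, hts_def]; linarith only [hlt']
  have htb2 : tb < ts := by rw [htb_def, hts_def]; linarith only [hlt']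
  have hts2 : ts < d' := by rw [hts_def]; linarith only [hlt']
  have hts0 : 0 < ts := by linarith only [hd0', htb1, htb2]
  have htb0 : 0 < tb := by linarith only [hd0', htb1]
  -- the small type v* first coordinate
  have hmin0 : 0 < min w.1 w'.1 := lt_min hwa hw'a
  obtain ⟨v1s, hv1s_def⟩ : ∃ x : ℝ, x = min w.1 w'.1 / (2 * H) := ⟨_, rfl⟩
  have hv1s0 : 0 < v1s := by rw [hv1s_def]; positivity
  have hv1s_lt_ε : v1s < ε := by
    have h2H : (1:ℝ) ≤ 2 * H := by linarith only [hH]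
    have hle : v1s ≤ min w.1 w'.1 := by
      rw [hv1s_def]
      exact div_le_self (le_of_lt hmin0) h2H
    have hminε : min w.1 w'.1 < ε := lt_of_le_of_lt (min_le_left _ _) hwb
    linarith only [hle, hminε]
  have hεHε : ε ≤ H * ε := le_mul_of_one_le_left (le_of_lt hε0) hH
  have hv1s_lt_Hε : v1s < H * ε := lt_of_lt_of_le hv1s_lt_ε hεHε
  obtain ⟨xs, hxs_def⟩ : ∃ x : ℝ, x = v1s / (2 * H) := ⟨_, rfl⟩
  have hxs0 : 0 < xs := by rw [hxs_def]; positivity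
  have hHxs : H * xs = v1s / 2 := by
    rw [hxs_def]; field_simp
  have hxs_lt_v1s : xs < v1s := by
    rw [hxs_def]
    exact div_lt_self hv1s0 (by linarith only [hH])
  obtain ⟨eta, heta_def⟩ : ∃ x : ℝ, x = w'.1 / 4 := ⟨_, rfl⟩
  have heta0 : 0 < eta := by rw [heta_def]; linarith only [hw'a]
  have heta1 : eta < 1 := by rw [heta_def]; linarith only [hw'b, hεlt1]
  -- the slab type v̄ = (vb1, vb1 + tb)
  have hmaxlt : max (H * w.1) (H * xs) < H * ε := by
    apply max_lt
    · exact mul_lt_mul_of_pos_left hwb hH0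
    · exact mul_lt_mul_of_pos_left (lt_trans hxs_lt_v1s hv1s_lt_ε) hH0
  obtain ⟨vb1, hvb1_def⟩ : ∃ x : ℝ, x = (max (H * w.1) (H * xs) + H * ε) / 2 := ⟨_, rfl⟩
  have hvb1a : H * w.1 < vb1 := by
    have h' := le_max_left (H * w.1) (H * xs)
    rw [hvb1_def]; linarith only [h', hmaxlt]
  have hvb1b : H * xs < vb1 := by
    have h' := le_max_right (H * w.1) (H * xs)
    rw [hvb1_def]; linarith only [h', hmaxlt]
  have hvb1c : vb1 < H * ε := by rw [hvb1_def]; linarith only [hmaxlt]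
  have hvb10 : 0 < vb1 := by
    have h' : 0 < H * w.1 := mul_pos hH0 hwa
    linarith only [h', hvb1a]
  have hvb1lt1 : vb1 < 1 := by
    have h' : H * ε = ε * H := mul_comm _ _
    linarith only [h', hvb1c, hεH]
  have hNnvb : Nn (vb1, vb1 + tb) :=
    ⟨le_of_lt hvb10, by show (0:ℝ) ≤ vb1 + tb; linarith only [hvb10, htb0]⟩
  -- Step 3 : φ₂ v̄ ≥ N
  have hπw_le : π₁ w ≤ H * w.1 := aux_pi1_le m H hH hA π₁ h1 w hNnw
  have hπw_lt : π₁ w < vb1 := lt_of_le_of_lt hπw_le hvb1a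
  have hx3 : m.xV1 (vb1, vb1 + tb) w = true ∧ m.xV2 (vb1, vb1 + tb) w = true := by
    refine (hV w (vb1, vb1 + tb) hNnw hwa hNnvb).2.2.1 hπw_lt ?_
    show vb1 - π₁ w < (vb1 + tb) - π₂ w
    linarith only [hd_def, htb1]
  have hxw2f : m.xW2 (vb1, vb1 + tb) w = false := by
    cases h : m.xW2 (vb1, vb1 + tb) w
    · rfl
    · exact absurd ⟨hx3.2, h⟩ (m.feas2 _ w)
  have hφvb_ge : vb1 ≤ H * φ₁ (vb1, vb1 + tb) :=
    aux_phi1_ge m H hH hA φ₁ φ₂ hW (vb1, vb1 + tb) hNnvb hvb10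
  have ha_lt_A : w.1 < φ₁ (vb1, vb1 + tb) := by
    have h2 : H * w.1 < H * φ₁ (vb1, vb1 + tb) := lt_of_lt_of_le hvb1a hφvb_ge
    exact lt_of_mul_lt_mul_left h2 (le_of_lt hH0)
  have hBvb : N ≤ φ₂ (vb1, vb1 + tb) := by
    by_contra hcon
    push_neg at hcon
    have hcl2 := (hW (vb1, vb1 + tb) w hNnvb hvb10 hNnw).2.1
    have hres := hcl2 ha_lt_A (by rw [hwc]; exact hcon)
    rw [hres.2] at hxw2f
    exact absurd hxw2f (by simp)
  -- Step 4 : the probe point u* = (xs, N - eta) has π₂ - π₁ ≤ tb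
  have hNnus : Nn (xs, N - eta) :=
    ⟨le_of_lt hxs0, by show (0:ℝ) ≤ N - eta; linarith only [hN1, heta1]⟩
  have hπus_le : π₁ (xs, N - eta) ≤ H * xs := aux_pi1_le m H hH hA π₁ h1 _ hNnus
  have hπus_lt_vb : π₁ (xs, N - eta) < vb1 := lt_of_le_of_lt hπus_le hvb1b
  have hxs_lt_A : xs < φ₁ (vb1, vb1 + tb) := by
    have h2 : H * xs < H * φ₁ (vb1, vb1 + tb) := lt_of_lt_of_le hvb1b hφvb_ge
    exact lt_of_mul_lt_mul_left h2 (le_of_lt hH0)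
  have hxWus : m.xW1 (vb1, vb1 + tb) (xs, N - eta) = false ∧
      m.xW2 (vb1, vb1 + tb) (xs, N - eta) = false := by
    refine (hW (vb1, vb1 + tb) (xs, N - eta) hNnvb hvb10 hNnus).1 hxs_lt_A ?_
    show N - eta < φ₂ (vb1, vb1 + tb)
    linarith only [hBvb, heta0]
  have hxV1us : m.xV1 (vb1, vb1 + tb) (xs, N - eta) = true :=
    (h1 (xs, N - eta) (vb1, vb1 + tb) hNnus hNnvb).1 hπus_lt_vb
  have hxV2us : m.xV2 (vb1, vb1 + tb) (xs, N - eta) = true := by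
    cases h : m.xV2 (vb1, vb1 + tb) (xs, N - eta)
    · exfalso
      have happ := (hA (vb1, vb1 + tb) (xs, N - eta) hNnvb hNnus).2
      have hwe : welfare2 m (vb1, vb1 + tb) (xs, N - eta) = vb1 := by
        simp only [welfare2, setVal, hxV1us, h, hxWus.1, hxWus.2]
        simp
      have hop : vb1 + (N - eta) ≤ opt2 (vb1, vb1 + tb) (xs, N - eta) := le_max_left _ _
      rw [hwe] at happ
      have hprod : 0 ≤ (H - 1) * (1 - vb1) :=
        mul_nonneg (by linarith only [hH]) (by linarith only [hvb1lt1])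
      linarith only [happ, hop, hprod, heta1, hN1, hN]
    · rfl
  have hd2us : π₂ (xs, N - eta) - π₁ (xs, N - eta) ≤ tb := by
    by_contra hcon
    push_neg at hcon
    have hc4 := (hV (xs, N - eta) (vb1, vb1 + tb) hNnus hxs0 hNnvb).2.2.2
    have hres := (hc4 hπus_lt_vb (by
      show (vb1 + tb) - π₂ (xs, N - eta) < vb1 - π₁ (xs, N - eta)
      linarith only [hcon])).2 (by linarith only [hcon, htb1, hd0'])
    rw [hres] at hxV2us
    exact absurd hxV2us (by simp)
  -- Step 5 : the small type v* = (v1s, v1s + ts) has φ₂ v* ≥ N - eta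
  have hNnvs : Nn (v1s, v1s + ts) :=
    ⟨le_of_lt hv1s0, by show (0:ℝ) ≤ v1s + ts; linarith only [hv1s0, hts0]⟩
  have hπus_lt_vs : π₁ (xs, N - eta) < v1s := by
    have h2 : H * xs < v1s := by rw [hHxs]; linarith only [hv1s0]
    exact lt_of_le_of_lt hπus_le h2
  have hx3' : m.xV1 (v1s, v1s + ts) (xs, N - eta) = true ∧
      m.xV2 (v1s, v1s + ts) (xs, N - eta) = true := by
    refine (hV (xs, N - eta) (v1s, v1s + ts) hNnus hxs0 hNnvs).2.2.1 hπus_lt_vs ?_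
    show v1s - π₁ (xs, N - eta) < (v1s + ts) - π₂ (xs, N - eta)
    linarith only [hd2us, htb2]
  have hxW2us' : m.xW2 (v1s, v1s + ts) (xs, N - eta) = false := by
    cases h : m.xW2 (v1s, v1s + ts) (xs, N - eta)
    · rfl
    · exact absurd ⟨hx3'.2, h⟩ (m.feas2 _ _)
  have hφvs_ge : v1s ≤ H * φ₁ (v1s, v1s + ts) :=
    aux_phi1_ge m H hH hA φ₁ φ₂ hW _ hNnvs hv1s0
  have hxs_lt_Avs : xs < φ₁ (v1s, v1s + ts) := by
    have h2 : H * xs < H * φ₁ (v1s, v1s + ts) := by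
      rw [hHxs]; linarith only [hφvs_ge, hv1s0]
    exact lt_of_mul_lt_mul_left h2 (le_of_lt hH0)
  have hBvs : N - eta ≤ φ₂ (v1s, v1s + ts) := by
    by_contra hcon
    push_neg at hcon
    have hcl2 := (hW (v1s, v1s + ts) (xs, N - eta) hNnvs hv1s0 hNnus).2.1
    have hres := hcl2 hxs_lt_Avs hcon
    rw [hres.2] at hxW2us'
    exact absurd hxW2us' (by simp)
  -- Step 6 : v* loses both items at w'
  have hπw'_ge : w'.1 ≤ H * π₁ w' := aux_pi1_ge m H hH hA π₁ h1 w' hNnw' hw'a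
  have hveq : v1s * (2 * H) = min w.1 w'.1 := by
    rw [hv1s_def]; field_simp
  have h2v : 2 * v1s ≤ π₁ w' := by
    have hkey : H * (2 * v1s) ≤ H * π₁ w' := by
      have hm := min_le_right w.1 w'.1
      linarith only [hveq, hm, hπw'_ge]
    exact le_of_mul_le_mul_left hkey hH0
  have hv1s_lt_πw' : v1s < π₁ w' := by linarith only [h2v, hv1s0]
  have hx1' : m.xV1 (v1s, v1s + ts) w' = false ∧ m.xV2 (v1s, v1s + ts) w' = false := by
    refine (hV w' (v1s, v1s + ts) hNnw' hw'a hNnvs).1 hv1s_lt_πw' ?_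
    show v1s + ts < π₂ w'
    linarith only [hd'_def, hts2, hv1s_lt_πw']
  -- Step 7 : hence W gets item 2 at w'
  have hxW2w' : m.xW2 (v1s, v1s + ts) w' = true := by
    rcases hAlloc2 (v1s, v1s + ts) w' hNnvs hw'a hw'b hw'c
      (by show v1s < H * ε; exact hv1s_lt_Hε) with h | h
    · rw [hx1'.2] at h
      exact absurd h (by simp)
    · exact h
  -- Step 8 : contradiction via the fourth region of Char4W at (v*, w')
  have hφvs_le : φ₁ (v1s, v1s + ts) ≤ H * v1s :=
    aux_phi1_le m H hH hA φ₁ φ₂ hW _ hNnvs hv1s0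
  have hHv1s : H * v1s = min w.1 w'.1 / 2 := by
    rw [hv1s_def]; field_simp
  have hφ_le_b2 : φ₁ (v1s, v1s + ts) ≤ w'.1 / 2 := by
    have hm := min_le_right w.1 w'.1
    linarith only [hφvs_le, hHv1s, hm]
  have hφ_lt_b : φ₁ (v1s, v1s + ts) < w'.1 := by linarith only [hφ_le_b2, hw'a]
  have hfin := (hW (v1s, v1s + ts) w' hNnvs hv1s0 hNnw').2.2.2 hφ_lt_b (by
    show w'.2 - φ₂ (v1s, v1s + ts) < w'.1 - φ₁ (v1s, v1s + ts)
    rw [hw'c]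
    linarith only [hBvs, hφ_le_b2, heta_def, hw'a])
  have hnotlt : ¬ φ₁ (v1s, v1s + ts) < φ₂ (v1s, v1s + ts) := by
    intro hlt2
    have hres := hfin.2 hlt2
    rw [hres] at hxW2w'
    exact absurd hxW2w' (by simp)
  push_neg at hnotlt
  linarith only [hBvs, hφ_le_b2, hnotlt, heta_def, hw'b, hεlt1, hN1]

/-- for a DSIC + IR mechanism with approximation factor `H`,
for each `N ≥ H` and `ε < 1/H`, the difference `π₂(w) − π₁(w)` is constant
as `w` ranges over `S_{N,ε} = {w : 0 < w₁ < ε, w₂ = N}`. -/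
theorem pi2_minus_pi1_constant (m : Mechanism) (hD : DSIC m) (hIR : IR m)
    (H : ℝ) (hH : 1 ≤ H) (hA : ApproxH m H)
    (π₁ π₂ φ₁ φ₂ : ℝ × ℝ → ℝ)
    (h1 : Thresh1 m π₁) (h2 : Thresh2 m π₁ π₂)
    (hV : Char4V m π₁ π₂) (hW : Char4W m φ₁ φ₂)
    (N ε : ℝ) (hN : H ≤ N) (hε : ε < 1 / H)
    (hπsmall : ∀ w : ℝ × ℝ, 0 < w.1 → w.1 < ε → w.2 = N → π₁ w < H * ε)
    (hge : ∀ w : ℝ × ℝ, 0 < w.1 → w.1 < ε → w.2 = N → π₁ w ≤ π₂ w)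
    (hAlloc2 : ∀ (v w : ℝ × ℝ), Nn v → 0 < w.1 → w.1 < ε → w.2 = N →
      v.1 < H * ε → m.xV2 v w = true ∨ m.xW2 v w = true) :
    ∀ w w' : ℝ × ℝ, 0 < w.1 → w.1 < ε → w.2 = N →
      0 < w'.1 → w'.1 < ε → w'.2 = N →
      π₂ w - π₁ w = π₂ w' - π₁ w' := by

  intro w w' hwa hwb hwc hw'a hw'b hw'c
  by_contra hne
  rcases lt_or_gt_of_ne hne with h | h
  · exact aux_key m H hH hA π₁ π₂ φ₁ φ₂ h1 hV hW N ε hN hε hge hAlloc2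
      w w' hwa hwb hwc hw'a hw'b hw'c h
  · exact aux_key m H hH hA π₁ π₂ φ₁ φ₂ h1 hV hW N ε hN hε hge hAlloc2
      w' w hw'a hw'b hw'c hwa hwb hwc h
end
end

section
/- In the two-bidder two-item online setting, for every deterministic DSIC+IR mechanism achieving approximation factor H, for each N ≥ H and ε < 1/H, both thresholds π₁(w) and π₂(w) are individually constant as w ranges over S_{N,ε} = {w : 0 < w₁ < ε, w₂ = N}. -/
open scoped ENNReal

noncomputable section

private lemma nn_mk {a b : ℝ} (ha : 0 ≤ a) (hb : 0 ≤ b) : Nn (a, b) := ⟨ha, hb⟩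

private lemma other_false {x y : Bool} (h : ¬ (x = true ∧ y = true)) (hx : x = true) :
    y = false := by
  cases y
  · rfl
  · exact absurd ⟨hx, rfl⟩ h

private lemma other_false' {x y : Bool} (h : ¬ (x = true ∧ y = true)) (hy : y = true) :
    x = false := by
  cases x
  · rfl
  · exact absurd ⟨rfl, hy⟩ h

private lemma or_resolve {x y : Bool} (h : x = true ∨ y = true) (hx : x = false) :
    y = true := by
  rcases h with h | h
  · rw [hx] at h; exact absurd h (by simp)
  · exact h

/-- for a DSIC + IR mechanism with approximation factor `H`,
for each `N ≥ H` and `ε < 1/H`, both thresholds `π₁(w)` and `π₂(w)` are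
individually constant as `w` ranges over `S_{N,ε} = {w : 0 < w₁ < ε, w₂ = N}`. -/
theorem pis_are_frozen (m : Mechanism) (hD : DSIC m) (hIR : IR m)
    (H : ℝ) (hH : 1 ≤ H) (hA : ApproxH m H)
    (π₁ π₂ φ₁ φ₂ : ℝ × ℝ → ℝ)
    (h1 : Thresh1 m π₁) (h2 : Thresh2 m π₁ π₂)
    (hV : Char4V m π₁ π₂) (hW : Char4W m φ₁ φ₂)
    (N ε : ℝ) (hN : H ≤ N) (hε : ε < 1 / H)
    (hπsmall : ∀ w : ℝ × ℝ, 0 < w.1 → w.1 < ε → w.2 = N → π₁ w < H * ε)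
    (hDiff : ∀ w w' : ℝ × ℝ, 0 < w.1 → w.1 < ε → w.2 = N →
      0 < w'.1 → w'.1 < ε → w'.2 = N → π₂ w - π₁ w = π₂ w' - π₁ w')
    (hAlloc1 : ∀ (v w : ℝ × ℝ), Nn v → Nn w → m.xV1 v w = true ∨ m.xW1 v w = true)
    (hAlloc2 : ∀ (v w : ℝ × ℝ), Nn v → 0 < w.1 → w.1 < ε → w.2 = N →
      v.1 < H * ε → m.xV2 v w = true ∨ m.xW2 v w = true) :
    ∀ w w' : ℝ × ℝ, 0 < w.1 → w.1 < ε → w.2 = N →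
      0 < w'.1 → w'.1 < ε → w'.2 = N →
      π₁ w = π₁ w' ∧ π₂ w = π₂ w' := by
  have hH0 : (0:ℝ) < H := lt_of_lt_of_le one_pos hH
  have hN1 : (1:ℝ) ≤ N := le_trans hH hN
  -- F0 : thresholds for item 1 are nonnegative
  have F0 : ∀ u : ℝ × ℝ, Nn u → 0 < u.1 → 0 ≤ π₁ u := by
    intro u hNnu hu1
    by_contra hcon
    push_neg at hcon
    have hNn0 : Nn ((0:ℝ), (0:ℝ)) := nn_mk le_rfl le_rfl
    have hx : m.xV1 (0, 0) u = true := (h1 u (0, 0) hNnu hNn0).1 hcon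
    have hw : m.xW1 (0, 0) u = false := other_false (m.feas1 (0, 0) u) hx
    have happ := (hA (0, 0) u hNn0 hNnu).1
    simp only [opt1, welfare1] at happ
    rw [hx, hw] at happ
    simp at happ
    linarith
  -- key : π₁ cannot strictly increase between two points of S
  have key : ∀ u u' : ℝ × ℝ, 0 < u.1 → u.1 < ε → u.2 = N →
      0 < u'.1 → u'.1 < ε → u'.2 = N → ¬ (π₁ u < π₁ u') := by
    intro u u' hu1 hu2 huN hu'1 hu'2 hu'N hlt
    have hε0 : (0:ℝ) < ε := lt_trans hu1 hu2
    have hHε : H * ε < 1 := by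
      have h := (lt_div_iff₀ hH0).1 hε
      nlinarith
    have h1H : 1 / H ≤ 1 := by rw [div_le_one hH0]; exact hH
    have hNnu : Nn u := ⟨hu1.le, by rw [huN]; linarith⟩
    have hNnu' : Nn u' := ⟨hu'1.le, by rw [hu'N]; linarith⟩
    have hu1N : u.1 ≤ N := by linarith
    have hu'1N : u'.1 ≤ N := by linarith
    have hP1 : 0 ≤ π₁ u := F0 u hNnu hu1
    have hπu : π₁ u < H * ε := hπsmall u hu1 hu2 huN
    have hc := hDiff u u' hu1 hu2 huN hu'1 hu'2 hu'N
    -- 0 ≤ π₂ u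
    have hP2 : 0 ≤ π₂ u := by
      by_contra hcon
      push_neg at hcon
      obtain ⟨t, ht0, htε, htp⟩ : ∃ t : ℝ, 0 < t ∧ t ≤ ε ∧ t < -π₂ u := by
        refine ⟨min ε (-π₂ u) / 2, ?_, ?_, ?_⟩
        · have : 0 < min ε (-π₂ u) := lt_min hε0 (by linarith)
          linarith
        · have := min_le_left ε (-π₂ u); linarith
        · have := min_le_right ε (-π₂ u); linarith
      have hNnv : Nn (π₁ u + t, (0:ℝ)) := nn_mk (by linarith) le_rfl
      have hreg := (hV u (π₁ u + t, 0) hNnu hu1 hNnv).2.2.1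
        (show π₁ u < π₁ u + t by linarith)
        (show π₁ u + t - π₁ u < 0 - π₂ u by linarith)
      obtain ⟨hx1, hx2⟩ := hreg
      have hw1 : m.xW1 (π₁ u + t, 0) u = false :=
        other_false (m.feas1 _ u) hx1
      have hw2 : m.xW2 (π₁ u + t, 0) u = false :=
        other_false (m.feas2 _ u) hx2
      have happ := (hA (π₁ u + t, 0) u hNnv hNnu).2
      simp [opt2, welfare2, setVal, hx1, hx2, hw1, hw2] at happ
      have hsup : (π₁ u + t) ⊔ (0:ℝ) = π₁ u + t := sup_eq_left.mpr (by linarith)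
      rw [hsup] at happ
      have hle : π₁ u + t + u.2 ≤ H * (π₁ u + t) := by
        first
        | exact happ.1
        | exact le_trans (le_max_left _ _) happ
        | linarith [happ]
      rw [huN] at hle
      have hv1 : π₁ u + t ≤ H * ε + ε := by linarith
      have e1 : 0 ≤ H - 1 := by linarith
      have e2 : (H - 1) * (π₁ u + t) ≤ (H - 1) * (H * ε + ε) :=
        mul_le_mul_of_nonneg_left hv1 e1
      have e3 : H * (H * ε) < H * 1 := mul_lt_mul_of_pos_left hHε hH0
      have id1 : (H - 1) * (π₁ u + t)
          = H * (π₁ u + t) - (π₁ u + t) := by ring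
      have id2 : (H - 1) * (H * ε + ε) = H * (H * ε) - ε := by ring
      linarith
    set d := π₁ u' - π₁ u with hdd
    have hd0 : 0 < d := by rw [hdd]; linarith
    -- Step A : u.1 ≤ u'.1
    have hNnvh : Nn (π₁ u + d / 2, π₂ u + 3 * d / 4) := nn_mk (by linarith) (by linarith)
    have hboth := (hV u (π₁ u + d / 2, π₂ u + 3 * d / 4) hNnu hu1 hNnvh).2.2.1
      (show π₁ u < π₁ u + d / 2 by linarith)
      (show π₁ u + d / 2 - π₁ u < π₂ u + 3 * d / 4 - π₂ u by linarith)
    obtain ⟨hxv1u, hxv2u⟩ := hboth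
    have hxw1u : m.xW1 (π₁ u + d / 2, π₂ u + 3 * d / 4) u = false :=
      other_false (m.feas1 _ u) hxv1u
    have hempty := (hV u' (π₁ u + d / 2, π₂ u + 3 * d / 4) hNnu' hu'1 hNnvh).1
      (show π₁ u + d / 2 < π₁ u' by rw [hdd] at hd0 ⊢; linarith)
      (show π₂ u + 3 * d / 4 < π₂ u' by rw [hdd]; linarith)
    obtain ⟨hxv1u', _⟩ := hempty
    have hxw1u' : m.xW1 (π₁ u + d / 2, π₂ u + 3 * d / 4) u' = true :=
      or_resolve (hAlloc1 _ u' hNnvh hNnu') hxv1u'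
    have i1 := hD.2.2.1 (π₁ u + d / 2, π₂ u + 3 * d / 4) u u' hNnvh hNnu hNnu'
    have i2 := hD.2.2.1 (π₁ u + d / 2, π₂ u + 3 * d / 4) u' u hNnvh hNnu' hNnu
    simp only [uW1, hxw1u, hxw1u', if_true, if_false] at i1 i2
    simp at i1 i2
    have hAle : u.1 ≤ u'.1 := by linarith
    -- Step B
    have hNnvt : Nn ((0:ℝ), π₂ u + 3 * d / 4) := nn_mk le_rfl (by linarith)
    have hw1t : m.xW1 (0, π₂ u + 3 * d / 4) u = true := by
      cases hb : m.xW1 (0, π₂ u + 3 * d / 4) u with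
      | true => rfl
      | false =>
        exfalso
        have happ := (hA (0, π₂ u + 3 * d / 4) u hNnvt hNnu).1
        simp [opt1, welfare1, hb] at happ
        first
        | linarith [happ]
        | linarith [happ.2]
        | linarith [le_trans (le_max_right (0:ℝ) u.1) happ]
    have hv1fu : m.xV1 (0, π₂ u + 3 * d / 4) u = false :=
      other_false' (m.feas1 _ u) hw1t
    have hQ1pos : (0:ℝ) < π₁ u' := by linarith
    have hxv1u'2 : m.xV1 (0, π₂ u + 3 * d / 4) u' = false :=
      (h1 u' (0, π₂ u + 3 * d / 4) hNnu' hNnvt).2 hQ1pos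
    have hxv2u'2 : m.xV2 (0, π₂ u + 3 * d / 4) u' = false :=
      ((h2 u' (0, π₂ u + 3 * d / 4) hNnu' hu'1 hNnvt hQ1pos).2
        (show π₂ u + 3 * d / 4 < π₂ u' by rw [hdd]; linarith)).1
    have hxw1u'2 : m.xW1 (0, π₂ u + 3 * d / 4) u' = true :=
      or_resolve (hAlloc1 _ u' hNnvt hNnu') hxv1u'2
    have hxw2u'2 : m.xW2 (0, π₂ u + 3 * d / 4) u' = true :=
      or_resolve (hAlloc2 (0, π₂ u + 3 * d / 4) u' hNnvt hu'1 hu'2 hu'N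
        (show (0:ℝ) < H * ε from mul_pos hH0 hε0)) hxv2u'2
    cases hxv2u2 : m.xV2 (0, π₂ u + 3 * d / 4) u with
    | false =>
      -- then π₁ u = 0, and V-side DSIC/IR payment contradiction
      have hP1z : π₁ u = 0 := by
        by_contra hne
        have hpos : (0:ℝ) < π₁ u := lt_of_le_of_ne hP1 (Ne.symm hne)
        have hfoo := ((h2 u (0, π₂ u + 3 * d / 4) hNnu hu1 hNnvt hpos).1
          (show π₂ u < π₂ u + 3 * d / 4 by linarith)).1
        rw [hxv2u2] at hfoo
        exact Bool.false_ne_true hfoo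
      have hNnr : Nn (d / 8, π₂ u + d / 4) := nn_mk (by linarith) (by linarith)
      have hrboth := (hV u (d / 8, π₂ u + d / 4) hNnu hu1 hNnr).2.2.1
        (show π₁ u < d / 8 by rw [hP1z]; linarith)
        (show d / 8 - π₁ u < π₂ u + d / 4 - π₂ u by rw [hP1z]; linarith)
      obtain ⟨hr1, hr2⟩ := hrboth
      have hdev := hD.2.1 (0, π₂ u + 3 * d / 4) (d / 8, π₂ u + d / 4) u hNnvt hNnr hNnu
      have hdev2 := hD.2.1 (d / 8, π₂ u + d / 4) (0, π₂ u + 3 * d / 4) u hNnr hNnvt hNnu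
      simp [uV2, setVal, hr1, hr2, hv1fu, hxv2u2] at hdev hdev2
      have hm1 : d / 8 ⊔ (π₂ u + d / 4) = π₂ u + d / 4 := sup_eq_right.mpr (by linarith)
      have hm2 : (0:ℝ) ⊔ (π₂ u + 3 * d / 4) = π₂ u + 3 * d / 4 := sup_eq_right.mpr (by linarith)
      rw [hm2] at hdev
      rw [hm1] at hdev2
      linarith
    | true =>
      have hxw2u2 : m.xW2 (0, π₂ u + 3 * d / 4) u = false :=
        other_false (m.feas2 _ u) hxv2u2
      have j1 := hD.2.2.2 (0, π₂ u + 3 * d / 4) u u' hNnvt hNnu hNnu'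
      have j2 := hD.2.2.2 (0, π₂ u + 3 * d / 4) u' u hNnvt hNnu' hNnu
      simp [uW2, setVal, hw1t, hxw2u2, hxw1u'2, hxw2u'2] at j1 j2
      have hm2 : u'.1 ⊔ u'.2 = N := by rw [hu'N]; exact sup_eq_right.mpr (by linarith)
      rw [hm2] at j2
      have hj := j1.2
      rw [huN] at hj
      have hBle : u'.1 ≤ u.1 := by linarith
      have heq : u = u' := Prod.ext_iff.mpr ⟨le_antisymm hAle hBle, by rw [huN, hu'N]⟩
      rw [heq] at hlt
      exact lt_irrefl _ hlt
  intro w w' hw1 hw2 hwN hw'1 hw'2 hw'N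
  have hle1 : π₁ w' ≤ π₁ w := not_lt.1 (key w w' hw1 hw2 hwN hw'1 hw'2 hw'N)
  have hle2 : π₁ w ≤ π₁ w' := not_lt.1 (key w' w hw'1 hw'2 hw'N hw1 hw2 hwN)
  have hp1 : π₁ w = π₁ w' := le_antisymm hle2 hle1
  have hc := hDiff w w' hw1 hw2 hwN hw'1 hw'2 hw'N
  exact ⟨hp1, by linarith⟩
end
end

section
/- In the two-bidder two-item online setting, for every deterministic DSIC+IR mechanism achieving approximation factor H, for all N ≥ 2H, ε < 1/H, and w ∈ S_{N,ε} = {w : 0 < w₁ < ε, w₂ = N}, the thresholds satisfy π₂(w) > π₁(w) strictly (in particular π₂(w) ≥ 1 while π₁(w) < H·ε < 1). -/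
open scoped ENNReal

noncomputable section

/- The two bounds on `π₁` come from single-item reports `(a, 0)` of `V`: a losing report
caps `V`'s value by `H` times `W`'s, a winning one caps `W`'s value by `H` times `V`'s.
The bound on `π₂` comes from a report `(0, t)` that loses item 1 but wins item 2: then `W`,
who values item 2 at `N`, gets at most item 1, so `N ≤ H (t + w₁)`; letting `t ↓ π₂ w`
gives `π₂ w ≥ (N - H w₁) / H > 1`. -/

theorem le_of_forall_gt_imp_le_continuous {α β : Type*} [TopologicalSpace α] [LinearOrder α]
    [OrderTopology α] [DenselyOrdered α] [NoMaxOrder α] [TopologicalSpace β] [Preorder β]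
    [ClosedIciTopology β] {f : α → β} (hf : Continuous f) {a : β} {b : α}
    (h : ∀ t, b < t → a ≤ f t) : a ≤ f b :=
  ge_of_tendsto ((hf.tendsto b).mono_left nhdsWithin_le_nhds)
    (eventually_nhdsWithin_of_forall (s := Set.Ioi b) h)

section Thresholds

variable {m : Mechanism} {H : ℝ} {π₁ π₂ : ℝ × ℝ → ℝ} {v w : ℝ × ℝ}

theorem welfare1_eq_fst_of_xV1_true (hx : m.xV1 v w = true) : welfare1 m v w = v.1 := by
  have hxW : m.xW1 v w = false := by simpa [hx] using m.feas1 v w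
  simp [welfare1, hx, hxW]

theorem welfare1_le_of_xV1_false (hx : m.xV1 v w = false) (hw : 0 ≤ w.1) :
    welfare1 m v w ≤ w.1 := by
  cases hxW : m.xW1 v w <;> simp [welfare1, hx, hxW, hw]

theorem welfare2_le_of_xV1_false_of_xV2_true (hx1 : m.xV1 v w = false)
    (hx2 : m.xV2 v w = true) (hw : 0 ≤ w.1) : welfare2 m v w ≤ v.2 + w.1 := by
  have hxW : m.xW2 v w = false := by simpa [hx2] using m.feas2 v w
  cases hxW1 : m.xW1 v w <;> simp [welfare2, setVal, hx1, hx2, hxW, hxW1, hw]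

theorem pi1_le_mul_fst (hA : ApproxH m H) (h1 : Thresh1 m π₁) (hH : 0 ≤ H) (hw : Nn w) :
    π₁ w ≤ H * w.1 := by
  refine le_of_forall_lt_imp_le_of_dense fun a ha => ?_
  rcases lt_or_ge a 0 with ha0 | ha0
  · exact ha0.le.trans (mul_nonneg hH hw.1)
  have hv : Nn (a, 0) := ⟨ha0, le_rfl⟩
  have hlose : m.xV1 (a, 0) w = false := (h1 w (a, 0) hw hv).2 ha
  calc a ≤ opt1 (a, 0) w := le_max_left _ _
    _ ≤ H * welfare1 m (a, 0) w := (hA _ _ hv hw).1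
    _ ≤ H * w.1 := mul_le_mul_of_nonneg_left (welfare1_le_of_xV1_false hlose hw.1) hH

theorem fst_le_mul_max_pi1 (hA : ApproxH m H) (h1 : Thresh1 m π₁) (hw : Nn w) :
    w.1 ≤ H * max (π₁ w) 0 := by
  refine le_of_forall_gt_imp_le_continuous (f := fun t => H * max t 0) (by fun_prop)
    fun t ht => ?_
  have hv : Nn (max t 0, 0) := ⟨le_max_right _ _, le_rfl⟩
  have hwin : m.xV1 (max t 0, 0) w = true := (h1 w _ hw hv).1 (ht.trans_le (le_max_left _ _))
  calc w.1 ≤ opt1 (max t 0, 0) w := le_max_right _ _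
    _ ≤ H * welfare1 m (max t 0, 0) w := (hA _ _ hv hw).1
    _ = H * max t 0 := by rw [welfare1_eq_fst_of_xV1_true hwin]

theorem snd_le_mul_max_pi2_add_fst (hA : ApproxH m H) (h1 : Thresh1 m π₁)
    (h2 : Thresh2 m π₁ π₂) (hH : 0 ≤ H) (hw : Nn w) (hw1 : 0 < w.1) (hπ₁ : 0 < π₁ w) :
    w.2 ≤ H * (max (π₂ w) 0 + w.1) := by
  refine le_of_forall_gt_imp_le_continuous (f := fun t => H * (max t 0 + w.1)) (by fun_prop)
    fun t ht => ?_
  have hv : Nn (0, max t 0) := ⟨le_rfl, le_max_right _ _⟩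
  have hlose : m.xV1 (0, max t 0) w = false := (h1 w _ hw hv).2 hπ₁
  have hwin : m.xV2 (0, max t 0) w = true :=
    ((h2 w _ hw hw1 hv hπ₁).1 (ht.trans_le (le_max_left _ _))).1
  calc w.2 = (0, max t 0).1 + w.2 := (zero_add _).symm
    _ ≤ opt2 (0, max t 0) w := le_max_left _ _
    _ ≤ H * welfare2 m (0, max t 0) w := (hA _ _ hv hw).2
    _ ≤ H * (max t 0 + w.1) :=
      mul_le_mul_of_nonneg_left (welfare2_le_of_xV1_false_of_xV2_true hlose hwin hw.1) hH

end Thresholds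

theorem pi2_strictly_above_pi1_general (m : Mechanism)
    (H : ℝ) (hH : 1 ≤ H) (hA : ApproxH m H)
    (π₁ π₂ : ℝ × ℝ → ℝ)
    (h1 : Thresh1 m π₁) (h2 : Thresh2 m π₁ π₂) :
    ∀ N ε : ℝ, 2 * H ≤ N → ε < 1 / H →
      ∀ w : ℝ × ℝ, 0 < w.1 → w.1 < ε → w.2 = N →
        π₁ w < π₂ w ∧ 1 ≤ π₂ w ∧ π₁ w < H * ε := by
  intro N ε hN hε w hw1 hwε hwN
  have hH0 : 0 < H := one_pos.trans_le hH
  have hw : Nn w := ⟨hw1.le, by linarith⟩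
  have hHε : H * ε < 1 := by rw [lt_div_iff₀ hH0] at hε; linarith
  have hπ₁ε : π₁ w < H * ε :=
    (pi1_le_mul_fst hA h1 hH0.le hw).trans_lt (mul_lt_mul_of_pos_left hwε hH0)
  have hπ₁ : 0 < π₁ w := by
    have hmax : 0 < max (π₁ w) 0 :=
      pos_of_mul_pos_right (hw1.trans_le (fst_le_mul_max_pi1 hA h1 hw)) hH0.le
    exact (lt_max_iff.mp hmax).resolve_right (lt_irrefl 0)
  have hπ₂ : 1 < π₂ w := by
    have hN' := snd_le_mul_max_pi2_add_fst hA h1 h2 hH0.le hw hw1 hπ₁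
    have hHw : H * w.1 < 1 := (mul_lt_mul_of_pos_left hwε hH0).trans hHε
    have hmax : H * 1 < H * max (π₂ w) 0 := by linarith [mul_add H (max (π₂ w) 0) w.1]
    exact (lt_max_iff.mp (lt_of_mul_lt_mul_left hmax hH0.le)).resolve_right (by norm_num)
  exact ⟨hπ₁ε.trans (hHε.trans hπ₂), hπ₂.le, hπ₁ε⟩

/-- for a DSIC + IR mechanism with approximation factor `H`,
for `N ≥ 2H`, `ε < 1/H` and `w ∈ S_{N,ε}`, the thresholds satisfy
`π₂(w) > π₁(w)` strictly; in particular `π₂(w) ≥ 1` while `π₁(w) < H·ε`. -/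
theorem pi2_strictly_above_pi1 (m : Mechanism) (hD : DSIC m) (hIR : IR m)
    (H : ℝ) (hH : 1 ≤ H) (hA : ApproxH m H)
    (π₁ π₂ : ℝ × ℝ → ℝ)
    (h1 : Thresh1 m π₁) (h2 : Thresh2 m π₁ π₂) :
    ∀ N ε : ℝ, 2 * H ≤ N → ε < 1 / H →
      ∀ w : ℝ × ℝ, 0 < w.1 → w.1 < ε → w.2 = N →
        π₁ w < π₂ w ∧ 1 ≤ π₂ w ∧ π₁ w < H * ε :=
  pi2_strictly_above_pi1_general m H hH hA π₁ π₂ h1 h2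
end
end

section
/- The 'bundling' allocation rule — which, given reports v=(v₁,v₂) and w=(w₁,w₂), allocates both arriving items to the bidder achieving max{v₁,v₂,w₁,w₂} — admits no payment functions making the resulting mechanism DSIC and IR in the two-bidder two-item online setting. Concretely: there exist reports where v₂ is the unique maximum, w₁ > v₁, and only item 1 arrives, such that any IR payment for V is at most v₁, and then bidder V with a different true type (v₁' slightly below w₁, v₂' huge) gains by misreporting. -/
open scoped ENNReal

noncomputable section

/-!
Truthfulness in the scenario where only item 1 arrives forces `V`'s allocation of item 1 to be
monotone in its reported value for item 1 (the two DSIC inequalities between a winning and a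
losing report sandwich the payment difference). Bundling is not monotone in that sense: against
`w = (1, 0)` the report `(0, 2)` wins item 1 while `(1/2, 0)` loses it.
-/

theorem DSIC.fst_le_of_xV1 {m : Mechanism} (h : DSIC m) {r t w : ℝ × ℝ}
    (hr : Nn r) (ht : Nn t) (hw : Nn w) (hwin : m.xV1 r w = true) (hlose : m.xV1 t w = false) :
    t.1 ≤ r.1 := by
  have hr_dev := h.1 r t w hr ht hw
  have ht_dev := h.1 t r w ht hr hw
  simp only [uV1, hwin, hlose, if_true, Bool.false_eq_true, if_false] at hr_dev ht_dev
  linarith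

/-- the bundling allocation rule — which gives all arriving items to
the bidder with the highest single reported value — admits no payments making the
mechanism DSIC and IR. -/
theorem bundling_not_truthful (m : Mechanism)
    (hbundle : ∀ v w : ℝ × ℝ, Nn v → Nn w →
      (max w.1 w.2 < max v.1 v.2 →
        m.xV1 v w = true ∧ m.xV2 v w = true ∧ m.xW1 v w = false ∧ m.xW2 v w = false) ∧
      (max v.1 v.2 < max w.1 w.2 →
        m.xW1 v w = true ∧ m.xW2 v w = true ∧ m.xV1 v w = false ∧ m.xV2 v w = false)) :
    ¬(DSIC m ∧ IR m) := by
  rintro ⟨hdsic, -⟩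
  have hr : Nn (0, 2) := by norm_num [Nn]
  have ht : Nn (1 / 2, 0) := by norm_num [Nn]
  have hw : Nn (1, 0) := by norm_num [Nn]
  have hwin : m.xV1 (0, 2) (1, 0) = true := ((hbundle _ _ hr hw).1 (by norm_num)).1
  have hlose : m.xV1 (1 / 2, 0) (1, 0) = false := ((hbundle _ _ ht hw).2 (by norm_num)).2.2.1
  have hmono := hdsic.fst_le_of_xV1 hr ht hw hwin hlose
  norm_num at hmono
end
end
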